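/- Let A be an m×n complex matrix with m ≥ 2, let τ > 0, set M = A A^H + τ I_m, let b ∈ ℂ^m, and let y* = M^{-1}b. Let y ∈ ℂ^m with residual r = b − My, let Ω ⊆ {1,…,m} be a nonempty set of s row indices, let i* ∈ Ω maximize |r_(j)|/‖M_(j)‖₂ over j ∈ Ω, and set y' = y + ((b_(i*) − M_(i*)y)/‖M_(i*)‖₂²)·(M_(i*))^H. Assume there exist ε̂, ε̆ ≥ 0 with ε̂ < 1 such that (1/s)·Σ_{j∈Ω} |r_(j)|² ≥ ((1−ε̂)/(m−1))·‖r‖₂² and (1/s)·Σ_{j∈Ω} ‖M_(j)‖₂² ≤ ((1+ε̆)/(m−1))·ν, where ν = max_{1≤i≤m} Σ_{j≠i} ‖M_(j)‖₂². Then ‖y' − y*‖₂² ≤ (1 − ((1−ε̂)/(1+ε̆))·(λ_min(M^H M)/ν))·‖y − y*‖₂². -/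

import Mathlib

open scoped Matrix

private lemma sum_sq_norm_eq_re_dot' {k : ℕ} (v : Fin k → ℂ) :
    (∑ j, ‖v j‖ ^ 2) = (dotProduct (star v) v).re := by
  rw [dotProduct, Complex.re_sum]
  refine Finset.sum_congr rfl fun j _ => ?_
  rw [Pi.star_apply, Complex.star_def, mul_comm, Complex.mul_conj, Complex.ofReal_re,
    ← Complex.sq_norm]

private lemma nsq_eq' (z : ℂ) : ‖z‖ ^ 2 = Complex.normSq z := by
  rw [← Complex.sq_norm]

open ComplexOrder in
private lemma det_unit_aux {m k : ℕ} (A : Matrix (Fin m) (Fin k) ℂ) {τ : ℝ} (hτ : 0 < τ)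
    (M : Matrix (Fin m) (Fin m) ℂ) (hM : M = A * A.conjTranspose + (τ : ℂ) • 1) :
    IsUnit M.det := by
  subst hM
  refine (Matrix.isUnit_iff_isUnit_det _).mp ?_
  refine Matrix.PosDef.isUnit ?_
  refine Matrix.PosDef.posSemidef_add (Matrix.posSemidef_self_mul_conjTranspose A) ?_
  rw [Matrix.smul_one_eq_diagonal]
  exact Matrix.posDef_diagonal_iff.mpr fun _ => Complex.zero_lt_real.mpr hτ

private lemma diag_large {m k : ℕ} {τ : ℝ} (hτ : 0 < τ)
    (M : Matrix (Fin m) (Fin m) ℂ) (B : Matrix (Fin m) (Fin k) ℂ)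
    (hM : M = B * B.conjTranspose + (τ : ℂ) • 1) (j : Fin m) :
    0 < ∑ l, ‖M j l‖ ^ 2 := by
  have h1 : τ ≤ (M j j).re := by
    subst hM
    simp only [Matrix.add_apply, Matrix.smul_apply, Matrix.one_apply_eq, smul_eq_mul, mul_one,
      Complex.add_re, Complex.ofReal_re, Matrix.mul_apply, Matrix.conjTranspose_apply]
    have h2 : (0:ℝ) ≤ (∑ l, B j l * star (B j l)).re := by
      rw [Complex.re_sum]
      refine Finset.sum_nonneg fun l _ => ?_
      rw [Complex.star_def, Complex.mul_conj, Complex.ofReal_re]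
      exact Complex.normSq_nonneg _
    linarith
  have h3 : τ ≤ ‖M j j‖ := le_trans h1 (Complex.re_le_norm _)
  have h4 : τ ^ 2 ≤ ‖M j j‖ ^ 2 := by nlinarith
  have h5 : ‖M j j‖ ^ 2 ≤ ∑ l, ‖M j l‖ ^ 2 :=
    Finset.single_le_sum (f := fun l => ‖M j l‖ ^ 2) (fun l _ => by positivity)
      (Finset.mem_univ j)
  nlinarith

private lemma kacz_identity {m : ℕ} (M : Matrix (Fin m) (Fin m) ℂ) (e : Fin m → ℂ) (i : Fin m)
    (ρ : ℂ) (N : ℝ) (hN : 0 < N) (hNdef : N = ∑ l, ‖M i l‖ ^ 2)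
    (hS : ∑ j, M i j * e j = -ρ) :
    ∑ j, ‖e j + (ρ / (N : ℂ)) * (starRingEnd ℂ) (M i j)‖ ^ 2
      = (∑ j, ‖e j‖ ^ 2) - ‖ρ‖ ^ 2 / N := by
  set c : ℂ := ρ / (N : ℂ) with hc
  have expand : ∀ j, ‖e j + c * (starRingEnd ℂ) (M i j)‖ ^ 2
      = ‖e j‖ ^ 2 + 2 * ((starRingEnd ℂ) c * (M i j * e j)).re
        + Complex.normSq c * ‖M i j‖ ^ 2 := by
    intro j
    rw [nsq_eq', Complex.normSq_add, nsq_eq', nsq_eq']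
    have h1 : Complex.normSq (c * (starRingEnd ℂ) (M i j))
        = Complex.normSq c * Complex.normSq (M i j) := by
      rw [Complex.normSq_mul, Complex.normSq_conj]
    have h2 : e j * (starRingEnd ℂ) (c * (starRingEnd ℂ) (M i j))
        = (starRingEnd ℂ) c * (M i j * e j) := by
      rw [map_mul, Complex.conj_conj]; ring
    rw [h1, h2]; ring
  rw [Finset.sum_congr rfl fun j _ => expand j, Finset.sum_add_distrib, Finset.sum_add_distrib]
  have h3 : ∑ j, 2 * ((starRingEnd ℂ) c * (M i j * e j)).re
      = 2 * ((starRingEnd ℂ) c * (-ρ)).re := by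
    rw [← Finset.mul_sum, ← Complex.re_sum, ← Finset.mul_sum, hS]
  have h4 : ((starRingEnd ℂ) c * (-ρ)).re = -(‖ρ‖ ^ 2 / N) := by
    have h4' : (starRingEnd ℂ) c * (-ρ) = ((-(‖ρ‖ ^ 2 / N) : ℝ) : ℂ) := by
      rw [hc, map_div₀, Complex.conj_ofReal]
      rw [Complex.ofReal_neg, Complex.ofReal_div]
      have h4'' : ((‖ρ‖ ^ 2 : ℝ) : ℂ) = ρ * (starRingEnd ℂ) ρ := by
        rw [Complex.mul_conj, nsq_eq']
      rw [h4'']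
      field_simp
    rw [h4', Complex.ofReal_re]
  have h5 : ∑ j, Complex.normSq c * ‖M i j‖ ^ 2 = ‖ρ‖ ^ 2 / N := by
    rw [← Finset.mul_sum, ← hNdef, hc, Complex.normSq_div, Complex.normSq_ofReal, ← nsq_eq']
    field_simp
  rw [h3, h4, h5]
  ring

/-- Squared Euclidean 2-norm of a vector in `ℂⁿ`. -/
noncomputable def rnsq {n : ℕ} (v : Fin n → ℂ) : ℝ := ∑ j, ‖v j‖ ^ 2

/-- The Kaczmarz update of `y` with respect to row `i` of `M`. -/
noncomputable def kacz {m n : ℕ} (A : Matrix (Fin m) (Fin n) ℂ) (b : Fin m → ℂ)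
    (i : Fin m) (y : Fin n → ℂ) : Fin n → ℂ :=
  fun j => y j + ((b i - ∑ l, A i l * y l) / ((∑ l, ‖A i l‖ ^ 2 : ℝ) : ℂ)) * (starRingEnd ℂ) (A i j)

/-- The smallest eigenvalue of the Hermitian positive semidefinite matrix `MᴴM`. -/
noncomputable def lamMin {m n : ℕ} (M : Matrix (Fin m) (Fin n) ℂ) : ℝ :=
  ⨅ k : Fin n, (Matrix.isHermitian_conjTranspose_mul_self M).eigenvalues k


private lemma rayleigh_min {m : ℕ} (hm : 0 < m) (M : Matrix (Fin m) (Fin m) ℂ) (x : Fin m → ℂ) :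
    lamMin M * (∑ j, ‖x j‖ ^ 2) ≤ ∑ j, ‖(M.mulVec x) j‖ ^ 2 := by
  haveI : NeZero m := ⟨hm.ne'⟩
  set hH := Matrix.isHermitian_conjTranspose_mul_self M with hHdef
  set U : Matrix (Fin m) (Fin m) ℂ := (hH.eigenvectorUnitary : Matrix (Fin m) (Fin m) ℂ)
    with hUdef
  have hU1 : U * star U = 1 := Matrix.mem_unitaryGroup_iff.mp hH.eigenvectorUnitary.2
  set c : Fin m → ℂ := (star U).mulVec x with hc
  have hUc : U.mulVec c = x := by
    rw [hc, Matrix.mulVec_mulVec, hU1, Matrix.one_mulVec]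
  have hstarc : star x ᵥ* U = star c := by
    rw [hc, Matrix.star_mulVec, Matrix.star_eq_conjTranspose, Matrix.conjTranspose_conjTranspose]
  have hnp : (∑ j, ‖c j‖ ^ 2) = ∑ j, ‖x j‖ ^ 2 := by
    rw [sum_sq_norm_eq_re_dot', sum_sq_norm_eq_re_dot']
    congr 1
    have key : star (U *ᵥ c) = star c ᵥ* star U := by
      rw [Matrix.star_mulVec, Matrix.star_eq_conjTranspose]
    conv_lhs => rw [hc, Matrix.dotProduct_mulVec, ← key, hUc]
  have hmain : (dotProduct (star x) ((M.conjTranspose * M).mulVec x)).re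
      = ∑ k, hH.eigenvalues k * ‖c k‖ ^ 2 := by
    conv_lhs => rw [hH.spectral_theorem, Unitary.conjStarAlgAut_apply]
    rw [← Matrix.mulVec_mulVec, ← Matrix.mulVec_mulVec, Matrix.dotProduct_mulVec, hstarc, ← hc]
    rw [dotProduct, Complex.re_sum]
    refine Finset.sum_congr rfl fun k _ => ?_
    rw [Matrix.mulVec_diagonal, Pi.star_apply, Complex.star_def]
    show ((starRingEnd ℂ) (c k) * ((hH.eigenvalues k : ℂ) * c k)).re = _
    have e1 : (starRingEnd ℂ) (c k) * ((hH.eigenvalues k : ℂ) * c k)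
        = ((hH.eigenvalues k : ℂ)) * (c k * (starRingEnd ℂ) (c k)) := by ring
    rw [e1, Complex.mul_conj, ← Complex.ofReal_mul,
      Complex.ofReal_re, ← Complex.sq_norm]
  have hMx : (∑ j, ‖(M.mulVec x) j‖ ^ 2)
      = (dotProduct (star x) ((M.conjTranspose * M).mulVec x)).re := by
    rw [sum_sq_norm_eq_re_dot']
    congr 1
    rw [Matrix.star_mulVec, ← Matrix.dotProduct_mulVec, Matrix.mulVec_mulVec]
  rw [hMx, hmain, ← hnp, Finset.mul_sum]
  refine Finset.sum_le_sum fun k _ => ?_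
  have h1 : lamMin M ≤ hH.eigenvalues k :=
    ciInf_le (Set.Finite.bddBelow (Set.finite_range _)) k
  exact mul_le_mul_of_nonneg_right h1 (by positivity)

/-- One-step convergence bound of the PRKS method applied to the ridge-regression
system `(AAᴴ + τI) y = b`: with `M = AAᴴ + τI`, `y* = M⁻¹b`, sample `Ω` of size `s`,
`i* ∈ Ω` maximizing the homogenized residual over `Ω`, `y'` the Kaczmarz update, and
the sampling accuracy assumptions with parameters `ε̂, ε̆`,
`‖y' − y*‖₂² ≤ (1 − ((1−ε̂)/(1+ε̆))·(λ_min(MᴴM)/ν))·‖y − y*‖₂²`, where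
`ν = max_i Σ_{j≠i} ‖M_(j)‖₂²`. -/
theorem stmt16 {m n : ℕ} (hm : 2 ≤ m) (A : Matrix (Fin m) (Fin n) ℂ)
    (τ : ℝ) (hτ : 0 < τ) (b : Fin m → ℂ)
    (M : Matrix (Fin m) (Fin m) ℂ) (hM : M = A * A.conjTranspose + (τ : ℂ) • 1)
    (ystar : Fin m → ℂ) (hystar : ystar = M⁻¹.mulVec b)
    (y : Fin m → ℂ) (Ω : Finset (Fin m)) (hΩ : Ω.Nonempty)
    (istar : Fin m) (histarmem : istar ∈ Ω)
    (histar : ∀ j ∈ Ω, ‖b j - ∑ l, M j l * y l‖ / Real.sqrt (∑ l, ‖M j l‖ ^ 2) ≤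
      ‖b istar - ∑ l, M istar l * y l‖ / Real.sqrt (∑ l, ‖M istar l‖ ^ 2))
    (εh εb : ℝ) (hεh0 : 0 ≤ εh) (hεh1 : εh < 1) (hεb0 : 0 ≤ εb)
    (hres : ((1 - εh) / (m - 1 : ℝ)) * ∑ j, ‖b j - ∑ l, M j l * y l‖ ^ 2 ≤
      (1 / (Ω.card : ℝ)) * ∑ j ∈ Ω, ‖b j - ∑ l, M j l * y l‖ ^ 2)
    (hrow : (1 / (Ω.card : ℝ)) * ∑ j ∈ Ω, ∑ l, ‖M j l‖ ^ 2 ≤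
      ((1 + εb) / (m - 1 : ℝ)) *
        Finset.univ.sup' ⟨⟨0, by omega⟩, Finset.mem_univ _⟩
          (fun i => ∑ j ∈ Finset.univ.erase i, ∑ l, ‖M j l‖ ^ 2)) :
    rnsq (fun j => kacz M b istar y j - ystar j) ≤
      (1 - ((1 - εh) / (1 + εb)) *
          (lamMin M /
            Finset.univ.sup' ⟨⟨0, by omega⟩, Finset.mem_univ _⟩
              (fun i => ∑ j ∈ Finset.univ.erase i, ∑ l, ‖M j l‖ ^ 2))) *
        rnsq (fun j => y j - ystar j) := by
  -- basic positivity facts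
  have hm0 : 0 < m := by omega
  have hdet : IsUnit M.det := det_unit_aux A hτ M hM
  have hb : M.mulVec ystar = b := by
    rw [hystar, Matrix.mulVec_mulVec, Matrix.mul_nonsing_inv M hdet, Matrix.one_mulVec]
  have hNj : ∀ j, 0 < ∑ l, ‖M j l‖ ^ 2 := fun j => diag_large hτ M A hM j
  set ν : ℝ := Finset.univ.sup' ⟨⟨0, by omega⟩, Finset.mem_univ _⟩
      (fun i => ∑ j ∈ Finset.univ.erase i, ∑ l, ‖M j l‖ ^ 2) with hν
  have hνpos : 0 < ν := by
    have hle : (∑ j ∈ Finset.univ.erase (⟨0, by omega⟩ : Fin m), ∑ l, ‖M j l‖ ^ 2) ≤ ν :=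
      Finset.le_sup' (fun i => ∑ j ∈ Finset.univ.erase i, ∑ l, ‖M j l‖ ^ 2)
        (Finset.mem_univ (⟨0, by omega⟩ : Fin m))
    have hpos : 0 < ∑ j ∈ Finset.univ.erase (⟨0, by omega⟩ : Fin m), ∑ l, ‖M j l‖ ^ 2 := by
      refine Finset.sum_pos' (fun j _ => (hNj j).le) ⟨⟨1, by omega⟩, ?_, hNj _⟩
      exact Finset.mem_erase.mpr ⟨by simp [Fin.ext_iff], Finset.mem_univ _⟩
    linarith
  -- abbreviations
  set N : ℝ := ∑ l, ‖M istar l‖ ^ 2 with hNdef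
  have hN : 0 < N := hNj istar
  set ρ : ℂ := b istar - ∑ l, M istar l * y l with hρ
  set E : ℝ := rnsq (fun j => y j - ystar j) with hE
  have hE0 : 0 ≤ E := Finset.sum_nonneg fun j _ => by positivity
  -- the Kaczmarz step identity
  have hS : ∑ j, M istar j * (y j - ystar j) = -ρ := by
    have h1 : ∑ j, M istar j * (y j - ystar j)
        = (∑ j, M istar j * y j) - ∑ j, M istar j * ystar j := by
      rw [← Finset.sum_sub_distrib]; exact Finset.sum_congr rfl fun j _ => by ring
    have h2 : ∑ j, M istar j * ystar j = b istar := by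
      have := congrFun hb istar
      exact this
    rw [h1, h2, hρ]; ring
  have key : rnsq (fun j => kacz M b istar y j - ystar j) = E - ‖ρ‖ ^ 2 / N := by
    have h0 : rnsq (fun j => kacz M b istar y j - ystar j)
        = ∑ j, ‖(y j - ystar j) + (ρ / (N : ℂ)) * (starRingEnd ℂ) (M istar j)‖ ^ 2 := by
      unfold rnsq kacz
      refine Finset.sum_congr rfl fun j _ => ?_
      congr 1
      rw [hρ]
      congr 1
      ring
    rw [h0, kacz_identity M (fun j => y j - ystar j) istar ρ N hN hNdef hS]
    rfl
  -- Rayleigh bound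
  have hT : lamMin M * E ≤ ∑ j, ‖b j - ∑ l, M j l * y l‖ ^ 2 := by
    have h1 := rayleigh_min hm0 M (fun j => ystar j - y j)
    have h2 : (∑ j, ‖ystar j - y j‖ ^ 2) = E := by
      rw [hE]; unfold rnsq
      exact Finset.sum_congr rfl fun j _ => by rw [norm_sub_rev]
    have h3 : ∀ j, (M.mulVec (fun j => ystar j - y j)) j = b j - ∑ l, M j l * y l := by
      intro j
      have h4 : M.mulVec (fun j => ystar j - y j) = M.mulVec ystar - M.mulVec y := by
        rw [← Matrix.mulVec_sub]; rfl
      rw [h4, hb]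
      rfl
    rw [h2] at h1
    calc lamMin M * E ≤ ∑ j, ‖(M.mulVec (fun j => ystar j - y j)) j‖ ^ 2 := h1
      _ = ∑ j, ‖b j - ∑ l, M j l * y l‖ ^ 2 :=
          Finset.sum_congr rfl fun j _ => by rw [h3]
  -- pointwise residual bound on Ω
  set R : ℝ := ‖ρ‖ ^ 2 / N with hR
  have hR0 : 0 ≤ R := by positivity
  have hsq : ∀ j ∈ Ω, ‖b j - ∑ l, M j l * y l‖ ^ 2 ≤ R * (∑ l, ‖M j l‖ ^ 2) := by
    intro j hj
    have h := histar j hj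
    have h2 : (‖b j - ∑ l, M j l * y l‖ / Real.sqrt (∑ l, ‖M j l‖ ^ 2)) ^ 2
        ≤ (‖b istar - ∑ l, M istar l * y l‖ / Real.sqrt (∑ l, ‖M istar l‖ ^ 2)) ^ 2 :=
      pow_le_pow_left₀ (by positivity) h 2
    rw [div_pow, div_pow, Real.sq_sqrt (hNj j).le, Real.sq_sqrt (hNj istar).le] at h2
    have h3 : ‖b j - ∑ l, M j l * y l‖ ^ 2 / (∑ l, ‖M j l‖ ^ 2) ≤ R := h2
    calc ‖b j - ∑ l, M j l * y l‖ ^ 2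
        = (‖b j - ∑ l, M j l * y l‖ ^ 2 / (∑ l, ‖M j l‖ ^ 2)) * (∑ l, ‖M j l‖ ^ 2) :=
          (div_mul_cancel₀ _ (hNj j).ne').symm
      _ ≤ R * (∑ l, ‖M j l‖ ^ 2) := mul_le_mul_of_nonneg_right h3 (hNj j).le
  -- combine
  have hs : (0 : ℝ) < Ω.card := by
    exact_mod_cast Finset.card_pos.mpr hΩ
  have hd : (0 : ℝ) < (m : ℝ) - 1 := by
    have : (2 : ℝ) ≤ (m : ℝ) := by exact_mod_cast hm
    linarith
  have f2 : ∑ j ∈ Ω, ‖b j - ∑ l, M j l * y l‖ ^ 2 ≤ R * ∑ j ∈ Ω, ∑ l, ‖M j l‖ ^ 2 := by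
    rw [Finset.mul_sum]
    exact Finset.sum_le_sum hsq
  have f5 : ((1 - εh) / ((m : ℝ) - 1)) * (∑ j, ‖b j - ∑ l, M j l * y l‖ ^ 2)
      ≤ R * (((1 + εb) / ((m : ℝ) - 1)) * ν) := by
    calc ((1 - εh) / ((m : ℝ) - 1)) * (∑ j, ‖b j - ∑ l, M j l * y l‖ ^ 2)
        ≤ (1 / (Ω.card : ℝ)) * ∑ j ∈ Ω, ‖b j - ∑ l, M j l * y l‖ ^ 2 := hres
      _ ≤ (1 / (Ω.card : ℝ)) * (R * ∑ j ∈ Ω, ∑ l, ‖M j l‖ ^ 2) :=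
          mul_le_mul_of_nonneg_left f2 (by positivity)
      _ = R * ((1 / (Ω.card : ℝ)) * ∑ j ∈ Ω, ∑ l, ‖M j l‖ ^ 2) := by ring
      _ ≤ R * (((1 + εb) / ((m : ℝ) - 1)) * ν) := mul_le_mul_of_nonneg_left hrow hR0
  have h6 : (1 - εh) * (lamMin M * E) ≤ R * ((1 + εb) * ν) := by
    have h7 : (1 - εh) * (lamMin M * E) ≤ (1 - εh) * (∑ j, ‖b j - ∑ l, M j l * y l‖ ^ 2) :=
      mul_le_mul_of_nonneg_left hT (by linarith)
    have h8 := mul_le_mul_of_nonneg_right f5 hd.le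
    have h9 : ((1 - εh) / ((m : ℝ) - 1)) * (∑ j, ‖b j - ∑ l, M j l * y l‖ ^ 2) * ((m : ℝ) - 1)
        = (1 - εh) * (∑ j, ‖b j - ∑ l, M j l * y l‖ ^ 2) := by
      field_simp
    have h10 : R * (((1 + εb) / ((m : ℝ) - 1)) * ν) * ((m : ℝ) - 1) = R * ((1 + εb) * ν) := by
      field_simp
    rw [h9, h10] at h8
    linarith
  have hq : ((1 - εh) / (1 + εb)) * (lamMin M / ν) * E ≤ R := by
    have heq : ((1 - εh) / (1 + εb)) * (lamMin M / ν) * E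
        = ((1 - εh) * (lamMin M * E)) / ((1 + εb) * ν) := by
      field_simp
    rw [heq]
    exact (div_le_iff₀ (by positivity)).mpr h6
  rw [key]
  have hfin : (1 - ((1 - εh) / (1 + εb)) * (lamMin M / ν)) * E
      = E - ((1 - εh) / (1 + εb)) * (lamMin M / ν) * E := by ring
  rw [hfin]
  linarith [hq]
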